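/- arXiv:2308.01181 — 2 statements merged into one kernel-verified Lean document; each statement's English description precedes it below -/
import Mathlib

section
/- Let A be a nonzero polynomial in F_2[x] with deg(A) ≥ 1, and let m be the least nonnegative integer such that A_{2m+1} = 1. Then m + 1 ≤ 2^{deg(A) - 1}. -/
open Polynomial Finset

/-- The polynomial `M = x^2 + x + 1` over `F_2`. -/
noncomputable def M : Polynomial (ZMod 2) := X ^ 2 + X + 1

/-- The odd part of a binary polynomial: `P` divided by `x^{val_x(P)} (x+1)^{val_{x+1}(P)}`. -/
noncomputable def oddPart (P : Polynomial (ZMod 2)) : Polynomial (ZMod 2) :=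
  P / (X ^ P.rootMultiplicity 0 * (X + 1) ^ P.rootMultiplicity 1)

/-- The Collatz sequence of a binary polynomial `A`:
`A_0 = A`, `A_{2k+1} = oddPart A_{2k}`, `A_{2k+2} = 1 + M * A_{2k+1}`. -/
noncomputable def collatz (A : Polynomial (ZMod 2)) : ℕ → Polynomial (ZMod 2)
  | 0 => A
  | n + 1 => if n % 2 = 0 then oddPart (collatz A n) else 1 + M * collatz A n

/-- `a_k`: the multiplicity of `x` in `A_k`. -/
noncomputable def aSeq (A : Polynomial (ZMod 2)) (k : ℕ) : ℕ :=
  (collatz A k).rootMultiplicity 0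

/-- `b_k`: the multiplicity of `x + 1` in `A_k`. -/
noncomputable def bSeq (A : Polynomial (ZMod 2)) (k : ℕ) : ℕ :=
  (collatz A k).rootMultiplicity 1

/-- The length `ℓ_A = m + 1`, where `m` is the least nonnegative integer
with `A_{2m+1} = 1`. -/
noncomputable def collatzLength (A : Polynomial (ZMod 2)) : ℕ :=
  sInf {m : ℕ | collatz A (2 * m + 1) = 1} + 1

/-!
Write `T B = oddPart (1 + M * B)`, so that `A_{2n+1} = T^[n] (oddPart A)`. Every `A_{2n+1}` is odd,
and `T` does not raise the degree of an odd polynomial `B`: `1 + M B` has degree `deg B + 2` and is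
divisible by both `x` and `x + 1`. Since `m` is the first time the orbit reaches `1`, the orbit
`A_1, A_3, …, A_{2m+1}` has no repetition, so it consists of `m + 1` distinct odd polynomials of
degree at most `deg A`. An odd polynomial of degree `≤ d` is determined by its coefficients of
`x, …, x^{d-1}`: the constant term is `1` and the leading one is fixed by the value at `1`.
-/

theorem Function.iterate_injOn_Iic_of_isLeast {α : Type*} {f : α → α} {x y : α} {m : ℕ}
    (h : IsLeast {n | f^[n] x = y} m) : Set.InjOn (fun n => f^[n] x) (Set.Iic m) := by
  have hne : ∀ j k, j < k → k ≤ m → f^[j] x ≠ f^[k] x := by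
    intro j k hjk hkm heq
    have hy : f^[m - k + j] x = y := by
      rw [Function.iterate_add_apply, heq, ← Function.iterate_add_apply, Nat.sub_add_cancel hkm,
        h.1]
    have := h.2 hy
    omega
  intro j hj k hk heq
  by_contra hjk
  rcases Nat.lt_or_gt_of_ne hjk with hlt | hgt
  exacts [hne j k hlt hk heq, hne k j hgt hj heq.symm]

namespace Polynomial

variable {R : Type*} [Ring R]

theorem eq_zero_of_natDegree_le_of_eval_zero_of_eval_one {D : R[X]} {d : ℕ}
    (hd : D.natDegree ≤ d) (h0 : D.eval 0 = 0) (h1 : D.eval 1 = 0) (hcoeff : ∀ i, 0 < i → i < d → D.coeff i = 0) :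
    D = 0 := by
  have hmonomial : D = monomial d (D.coeff d) := by
    ext n
    rw [coeff_monomial]
    split_ifs with hn
    · rw [hn]
    rcases Nat.eq_zero_or_pos n with rfl | hpos
    · rw [coeff_zero_eq_eval_zero, h0]
    rcases Nat.lt_or_gt_of_ne hn with hgt | hlt
    · exact coeff_eq_zero_of_natDegree_lt (hd.trans_lt hgt)
    · exact hcoeff n hpos hlt
  have htop : D.coeff d = 0 := by
    rwa [hmonomial, eval_monomial, one_pow, mul_one] at h1
  rw [hmonomial, htop, map_zero]

theorem injOn_coeff_of_natDegree_le_of_eval_zero_of_eval_one (d : ℕ) (a b : R) :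
    Set.InjOn (fun P : R[X] => fun i : Fin (d - 1) => P.coeff (i + 1))
      {P | P.natDegree ≤ d ∧ P.eval 0 = a ∧ P.eval 1 = b} := by
  rintro P ⟨hPd, hP0, hP1⟩ Q ⟨hQd, hQ0, hQ1⟩ hPQ
  rw [← sub_eq_zero]
  refine eq_zero_of_natDegree_le_of_eval_zero_of_eval_one
    ((natDegree_sub_le P Q).trans (max_le hPd hQd)) (by simp [hP0, hQ0]) (by simp [hP1, hQ1]) ?_
  intro i hi hid
  have := congrFun hPQ ⟨i - 1, by omega⟩
  simp only [Nat.sub_add_cancel hi] at this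
  rw [coeff_sub, this, sub_self]

lemma X_add_one_eq_X_sub_C_one [CharP R 2] :
    (X + 1 : R[X]) = X - C 1 := by
  rw [C_1, CharTwo.sub_eq_add]

lemma X_add_one_ne_zero [Nontrivial R] : (X + 1 : R[X]) ≠ 0 := by
  simpa using X_add_C_ne_zero (1 : R)

end Polynomial

lemma ZMod.eq_one_of_ne_zero {x : ZMod 2} (h : x ≠ 0) : x = 1 := by
  revert x
  decide

lemma oddPart_mul (P : (ZMod 2)[X]) :
    X ^ P.rootMultiplicity 0 * (X + 1) ^ P.rootMultiplicity 1 * oddPart P = P := by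
  refine EuclideanDomain.mul_div_cancel' (mul_ne_zero (pow_ne_zero _ X_ne_zero)
    (pow_ne_zero _ X_add_one_ne_zero)) ?_
  have h0 : (X : (ZMod 2)[X]) ^ P.rootMultiplicity 0 ∣ P := by
    simpa using P.pow_rootMultiplicity_dvd 0
  have h1 : (X + 1 : (ZMod 2)[X]) ^ P.rootMultiplicity 1 ∣ P := by
    simpa only [X_add_one_eq_X_sub_C_one] using P.pow_rootMultiplicity_dvd 1
  have hcop : IsCoprime (X : (ZMod 2)[X]) (X + 1) :=
    ⟨1, 1, by linear_combination X * CharTwo.two_eq_zero (R := (ZMod 2)[X])⟩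
  exact hcop.pow.mul_dvd h0 h1

lemma oddPart_ne_zero {P : (ZMod 2)[X]} (hP : P ≠ 0) : oddPart P ≠ 0 := by
  intro h
  apply hP
  rw [← oddPart_mul P, h, mul_zero]

lemma oddPart_eval_zero {P : (ZMod 2)[X]} (hP : P ≠ 0) : (oddPart P).eval 0 = 1 := by
  refine ZMod.eq_one_of_ne_zero fun h => P.pow_rootMultiplicity_not_dvd hP 0 ?_
  have hX : (X : (ZMod 2)[X]) ∣ oddPart P := by
    simpa using dvd_iff_isRoot.2 h
  rw [map_zero, sub_zero, pow_succ]
  conv_rhs => rw [← oddPart_mul P]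
  exact mul_dvd_mul (dvd_mul_right _ _) hX

lemma oddPart_eval_one {P : (ZMod 2)[X]} (hP : P ≠ 0) : (oddPart P).eval 1 = 1 := by
  refine ZMod.eq_one_of_ne_zero fun h => P.pow_rootMultiplicity_not_dvd hP 1 ?_
  have hX : (X + 1 : (ZMod 2)[X]) ∣ oddPart P := by
    rw [X_add_one_eq_X_sub_C_one]
    exact dvd_iff_isRoot.2 h
  rw [← X_add_one_eq_X_sub_C_one, pow_succ]
  conv_rhs => rw [← oddPart_mul P]
  exact mul_dvd_mul (dvd_mul_left _ _) hX

lemma natDegree_oddPart_add {P : (ZMod 2)[X]} (hP : P ≠ 0) :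
    (oddPart P).natDegree + P.rootMultiplicity 0 + P.rootMultiplicity 1 = P.natDegree := by
  have hX1 : (X + 1 : (ZMod 2)[X]).natDegree = 1 := by
    rw [X_add_one_eq_X_sub_C_one, natDegree_X_sub_C]
  conv_rhs => rw [← oddPart_mul P]
  rw [natDegree_mul (mul_ne_zero (pow_ne_zero _ X_ne_zero) (pow_ne_zero _ X_add_one_ne_zero))
      (oddPart_ne_zero hP),
    natDegree_mul (pow_ne_zero _ X_ne_zero) (pow_ne_zero _ X_add_one_ne_zero),
    natDegree_pow, natDegree_pow, natDegree_X, hX1]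
  ring

def oddPolysOfNatDegreeLE (d : ℕ) : Set (ZMod 2)[X] :=
  {P | P.natDegree ≤ d ∧ P.eval 0 = 1 ∧ P.eval 1 = 1}

noncomputable def collatzStep (B : (ZMod 2)[X]) : (ZMod 2)[X] :=
  oddPart (1 + M * B)

lemma collatz_two_mul_add_one (A : (ZMod 2)[X]) (n : ℕ) :
    collatz A (2 * n + 1) = collatzStep^[n] (oddPart A) := by
  induction n with
  | zero => rfl
  | succ n ih =>
    have hodd : collatz A (2 * n + 2 + 1) = oddPart (collatz A (2 * n + 2)) := by
      rw [collatz, if_pos (by omega)]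
    have heven : collatz A (2 * n + 1 + 1) = 1 + M * collatz A (2 * n + 1) := by
      rw [collatz, if_neg (by omega)]
    rw [show 2 * (n + 1) + 1 = 2 * n + 2 + 1 by ring, hodd, heven, ih, Function.iterate_succ_apply']
    rfl

lemma natDegree_M : M.natDegree = 2 := by
  unfold M
  compute_degree!

lemma mapsTo_collatzStep (d : ℕ) :
    Set.MapsTo collatzStep (oddPolysOfNatDegreeLE d) (oddPolysOfNatDegreeLE d) := by
  rintro B ⟨hBd, hB0, hB1⟩
  have hB : B ≠ 0 := fun h => by simp [h] at hB0
  have hM : M ≠ 0 := fun h => by simpa [h] using natDegree_M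
  have hCd : (1 + M * B).natDegree = B.natDegree + 2 := by
    rw [natDegree_add_eq_right_of_natDegree_lt] <;>
      rw [natDegree_mul hM hB, natDegree_M] <;> simp [add_comm]
  have hC : 1 + M * B ≠ 0 := fun h => by simp [h] at hCd
  have hroot0 : 0 < (1 + M * B).rootMultiplicity 0 := by
    rw [rootMultiplicity_pos hC, IsRoot.def, eval_add, eval_mul, hB0, M]
    simp only [eval_add, eval_pow, eval_X, eval_one, ne_eq, OfNat.ofNat_ne_zero, not_false_eq_true,
      zero_pow, add_zero, zero_add, mul_one]
    decide
  have hroot1 : 0 < (1 + M * B).rootMultiplicity 1 := by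
    rw [rootMultiplicity_pos hC, IsRoot.def, eval_add, eval_mul, hB1, M]
    simp only [eval_add, eval_pow, eval_X, eval_one, one_pow, mul_one]
    decide
  have hdeg := natDegree_oddPart_add hC
  exact ⟨by unfold collatzStep; omega, oddPart_eval_zero hC, oddPart_eval_one hC⟩

theorem length_upper_bound_general (A : Polynomial (ZMod 2)) (hA : A ≠ 0) (m : ℕ)
    (hm : IsLeast {n : ℕ | collatz A (2 * n + 1) = 1} m) :
    m + 1 ≤ 2 ^ (A.natDegree - 1) := by
  have horbit : Set.MapsTo (fun n => collatzStep^[n] (oddPart A)) (Set.Iic m)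
      (oddPolysOfNatDegreeLE A.natDegree) := by
    intro n _
    refine (mapsTo_collatzStep _).iterate n ⟨?_, oddPart_eval_zero hA, oddPart_eval_one hA⟩
    have := natDegree_oddPart_add hA
    omega
  simp only [collatz_two_mul_add_one] at hm
  have hinj := (injOn_coeff_of_natDegree_le_of_eval_zero_of_eval_one A.natDegree 1 1).comp
    (Function.iterate_injOn_Iic_of_isLeast hm) horbit
  calc m + 1 = (Set.Iic m).ncard := by simp
    _ ≤ (Set.univ : Set (Fin (A.natDegree - 1) → ZMod 2)).ncard :=
      Set.ncard_le_ncard_of_injOn _ (fun _ _ => Set.mem_univ _) hinj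
    _ = 2 ^ (A.natDegree - 1) := by simp

theorem length_upper_bound (A : Polynomial (ZMod 2)) (hA : A ≠ 0)
    (hdeg : 1 ≤ A.natDegree) (m : ℕ)
    (hm : IsLeast {n : ℕ | collatz A (2 * n + 1) = 1} m) :
    m + 1 ≤ 2 ^ (A.natDegree - 1) :=
  length_upper_bound_general A hA m hm
end

section
/- Let r ≥ 2, u ≥ 1 and let A = (M^{2^r - 2} + M^{2^r - 3} + ⋯ + M + 1)^{2^u} = (Σ_{i=0}^{2^r - 2} M^i)^{2^u} in F_2[x]. Then the length ℓ_A equals 2^u + 1. -/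
open Polynomial Finset

/-! Put `n = 2^u`, `s = 2^(r-1) - 1` and `R = ∑_{i<s} M^i`. In characteristic two
`∑_{i<2s+1} M^i = 1 + M(M+1)R²` and `1 + MR = ∑_{i<2^(r-1)} M^i = (M+1)^s`, so by Frobenius
`A = 1 + (M(M+1))^n R^(2n)`. As `M + 1 = x(x+1)`, one Collatz round sends
`1 + M^(n+k) (M+1)^(n-k) Q` to `1 + M^(n+k+1) (M+1)^(n-k-1) Q`; these polynomials are odd and
different from `1` while `k < n`, and after `n` rounds one reaches the odd part of
`1 + (MR)^(2n) = (M+1)^(2ns)`, which is `1`. -/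

namespace CharTwo

variable {R : Type*} [CommSemiring R] [CharP R 2]

theorem geom_sum_two_mul (x : R) (m : ℕ) :
    ∑ i ∈ range (2 * m), x ^ i = (x + 1) * (∑ i ∈ range m, x ^ i) ^ 2 := by
  induction m with
  | zero => simp
  | succ m ih =>
    rw [Nat.mul_succ, sum_range_succ, sum_range_succ, ih, sum_range_succ, add_sq]
    ring

theorem geom_sum_two_mul_add_one (x : R) (m : ℕ) :
    ∑ i ∈ range (2 * m + 1), x ^ i = x * (x + 1) * (∑ i ∈ range m, x ^ i) ^ 2 + 1 := by
  rw [geom_sum_succ, geom_sum_two_mul, mul_assoc]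

theorem geom_sum_two_pow (x : R) (k : ℕ) :
    ∑ i ∈ range (2 ^ k), x ^ i = (x + 1) ^ (2 ^ k - 1) := by
  induction k with
  | zero => simp
  | succ k ih =>
    rw [pow_succ', geom_sum_two_mul, ih, ← pow_mul, ← pow_succ']
    have := Nat.one_le_two_pow (n := k)
    congr 1
    omega

end CharTwo

theorem X_add_one_eq_X_sub_C : (X + 1 : (ZMod 2)[X]) = X - C 1 := by
  rw [map_one, CharTwo.sub_eq_add]

theorem M_add_one : M + 1 = X * (X + 1) := by
  rw [M, add_assoc, CharTwo.add_self_eq_zero, add_zero]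
  ring

theorem eval_M_add_one (z : ZMod 2) : (M + 1).eval z = 0 := by
  rw [M_add_one, eval_mul, eval_add, eval_X, eval_one]
  revert z
  decide

theorem M_ne_zero : M ≠ 0 := fun h => by simpa [h] using eval_M_add_one 0

theorem M_add_one_ne_zero : M + 1 ≠ 0 := by
  rw [M_add_one, X_add_one_eq_X_sub_C]
  exact mul_ne_zero X_ne_zero (X_sub_C_ne_zero 1)

theorem oddPart_X_pow_mul_X_add_one_pow_mul_of_eval_ne_zero (a b : ℕ) {Q : (ZMod 2)[X]}
    (h0 : Q.eval 0 ≠ 0) (h1 : Q.eval 1 ≠ 0) : oddPart (X ^ a * (X + 1) ^ b * Q) = Q := by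
  have hQ : Q ≠ 0 := fun h => h0 (by simp [h])
  have hmonic : (X ^ a * (X + 1) ^ b : (ZMod 2)[X]).Monic :=
    (monic_X_pow a).mul ((monic_X_add_C 1).pow b)
  have hne : X ^ a * (X + 1) ^ b * Q ≠ 0 := mul_ne_zero hmonic.ne_zero hQ
  have hmul0 : rootMultiplicity 0 (X ^ a * (X + 1) ^ b * Q) = a := by
    rw [rootMultiplicity_mul hne, rootMultiplicity_mul hmonic.ne_zero,
      rootMultiplicity_eq_zero (p := Q) h0, rootMultiplicity_eq_zero (p := (X + 1) ^ b) (by simp)]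
    simpa using rootMultiplicity_X_sub_C_pow (0 : ZMod 2) a
  have hmul1 : rootMultiplicity 1 (X ^ a * (X + 1) ^ b * Q) = b := by
    rw [rootMultiplicity_mul hne, rootMultiplicity_mul hmonic.ne_zero,
      rootMultiplicity_eq_zero (p := Q) h1, rootMultiplicity_eq_zero (p := X ^ a) (by simp),
      X_add_one_eq_X_sub_C, rootMultiplicity_X_sub_C_pow, zero_add, add_zero]
  rw [oddPart, hmul0, hmul1, ← divByMonic_eq_div _ hmonic, mul_divByMonic_cancel_left Q hmonic]

theorem oddPart_eq_self {Q : (ZMod 2)[X]} (h0 : Q.eval 0 ≠ 0) (h1 : Q.eval 1 ≠ 0) :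
    oddPart Q = Q := by
  simpa using oddPart_X_pow_mul_X_add_one_pow_mul_of_eval_ne_zero 0 0 h0 h1

theorem exists_eq_X_pow_mul_X_add_one_pow_mul {P : (ZMod 2)[X]} (hP : P ≠ 0) :
    ∃ a b Q, Q.eval 0 ≠ 0 ∧ Q.eval 1 ≠ 0 ∧ P = X ^ a * (X + 1) ^ b * Q := by
  obtain ⟨P₁, hP₁, hX⟩ := exists_eq_pow_rootMultiplicity_mul_and_not_dvd P hP 0
  have hP₁0 : P₁ ≠ 0 := by rintro rfl; simp [hP] at hP₁
  obtain ⟨Q, hQ, hX1⟩ := exists_eq_pow_rootMultiplicity_mul_and_not_dvd P₁ hP₁0 1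
  generalize rootMultiplicity 0 P = a at hP₁
  generalize rootMultiplicity 1 P₁ = b at hQ
  refine ⟨a, b, Q, fun h => hX ?_, fun h => hX1 (dvd_iff_isRoot.2 h), ?_⟩
  · rw [hQ]
    exact (dvd_iff_isRoot.2 h).mul_left _
  · rw [hP₁, hQ, map_zero, sub_zero, ← X_add_one_eq_X_sub_C, mul_assoc]

theorem oddPart_X_pow_mul_X_add_one_pow_mul (a b : ℕ) (P : (ZMod 2)[X]) :
    oddPart (X ^ a * (X + 1) ^ b * P) = oddPart P := by
  rcases eq_or_ne P 0 with rfl | hP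
  · rw [mul_zero]
  obtain ⟨c, d, Q, h0, h1, rfl⟩ := exists_eq_X_pow_mul_X_add_one_pow_mul hP
  rw [oddPart_X_pow_mul_X_add_one_pow_mul_of_eval_ne_zero _ _ h0 h1, ← mul_assoc,
    mul_mul_mul_comm, ← pow_add, ← pow_add,
    oddPart_X_pow_mul_X_add_one_pow_mul_of_eval_ne_zero _ _ h0 h1]

theorem oddPart_M_add_one_pow (t : ℕ) : oddPart ((M + 1) ^ t) = 1 := by
  rw [M_add_one, mul_pow, ← mul_one (_ * _), oddPart_X_pow_mul_X_add_one_pow_mul_of_eval_ne_zero]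
    <;> simp

theorem collatz_one (A : (ZMod 2)[X]) : collatz A 1 = oddPart A := rfl

theorem collatz_two_mul_add_three (A : (ZMod 2)[X]) (k : ℕ) :
    collatz A (2 * k + 3) = oddPart (1 + M * collatz A (2 * k + 1)) := by
  rw [collatz, if_pos (by omega), collatz, if_neg (by omega)]

theorem collatzLength_eq_of {A : (ZMod 2)[X]} {n : ℕ} (h : collatz A (2 * n + 1) = 1)
    (hlt : ∀ k < n, collatz A (2 * k + 1) ≠ 1) : collatzLength A = n + 1 := by
  have hleast : IsLeast {m | collatz A (2 * m + 1) = 1} n :=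
    ⟨h, fun k hk => not_lt.1 fun hkn => hlt k hkn hk⟩
  rw [collatzLength, hleast.csInf_eq]

section Trajectory

variable {A Q : (ZMod 2)[X]} {n : ℕ}

theorem oddPart_one_add_mul_M_add_one_pow_mul (P : (ZMod 2)[X]) {c : ℕ} (hc : c ≠ 0) :
    oddPart (1 + P * (M + 1) ^ c * Q) = 1 + P * (M + 1) ^ c * Q := by
  have heval (z : ZMod 2) : (1 + P * (M + 1) ^ c * Q).eval z ≠ 0 := by
    rw [eval_add, eval_mul, eval_mul, eval_pow, eval_M_add_one, zero_pow hc, mul_zero, zero_mul,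
      add_zero, eval_one]
    exact one_ne_zero
  exact oddPart_eq_self (heval 0) (heval 1)

theorem collatz_two_mul_add_one_of_eq (hA : A = 1 + (M * (M + 1)) ^ n * Q) {k : ℕ} (hk : k ≤ n) :
    collatz A (2 * k + 1) = oddPart (1 + M ^ (n + k) * (M + 1) ^ (n - k) * Q) := by
  induction k with
  | zero => rw [collatz_one, hA, mul_pow, add_zero, Nat.sub_zero]
  | succ k ih =>
    obtain ⟨c, hc⟩ : ∃ c, n - k = c + 1 := ⟨n - k - 1, by omega⟩
    have hstep : 1 + M * (1 + M ^ (n + k) * (M + 1) ^ (n - k) * Q) =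
        X ^ 1 * (X + 1) ^ 1 * (1 + M ^ (n + (k + 1)) * (M + 1) ^ (n - (k + 1)) * Q) := by
      rw [hc, show n - (k + 1) = c by omega, pow_one, pow_one, ← M_add_one]
      ring
    rw [show 2 * (k + 1) + 1 = 2 * k + 3 by ring, collatz_two_mul_add_three, ih (by omega),
      oddPart_one_add_mul_M_add_one_pow_mul _ (by omega),
      hstep, oddPart_X_pow_mul_X_add_one_pow_mul]

theorem collatzLength_eq_of_eq_one_add (hQ : Q ≠ 0) (hA : A = 1 + (M * (M + 1)) ^ n * Q)
    (hend : oddPart (1 + M ^ (2 * n) * Q) = 1) : collatzLength A = n + 1 := by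
  refine collatzLength_eq_of ?_ fun k hk => ?_
  · rwa [collatz_two_mul_add_one_of_eq hA le_rfl, Nat.sub_self, pow_zero, mul_one, ← two_mul]
  · rw [collatz_two_mul_add_one_of_eq hA hk.le, oddPart_one_add_mul_M_add_one_pow_mul _ (by omega),
      Ne, add_eq_left]
    exact mul_ne_zero (mul_ne_zero (pow_ne_zero _ M_ne_zero) (pow_ne_zero _ M_add_one_ne_zero)) hQ

end Trajectory

theorem length_geom_sum_pow_two_minus_two_general (r u : ℕ) (hr : 2 ≤ r)
    (A : Polynomial (ZMod 2))
    (hA : A = (∑ i ∈ Finset.range (2 ^ r - 2 + 1), M ^ i) ^ 2 ^ u) :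
    collatzLength A = 2 ^ u + 1 := by
  obtain ⟨k, rfl⟩ : ∃ k, r = k + 1 := ⟨r - 1, by omega⟩
  obtain ⟨s, hs⟩ : ∃ s, 2 ^ k = s + 1 := ⟨2 ^ k - 1, (Nat.sub_add_cancel Nat.one_le_two_pow).symm⟩
  have hs1 : 1 ≤ s := by
    have : 2 ≤ 2 ^ k := Nat.le_self_pow (by omega) 2
    omega
  have hrange : 2 ^ (k + 1) - 2 + 1 = 2 * s + 1 := by
    rw [pow_succ, hs]
    omega
  set R := ∑ i ∈ range s, M ^ i
  have hMR : M * R + 1 = (M + 1) ^ s := by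
    rw [← geom_sum_succ, ← hs, CharTwo.geom_sum_two_pow, hs, Nat.add_sub_cancel]
  have hR : R ≠ 0 := fun h => by
    have := congrArg (eval 0) hMR
    rw [h, mul_zero, zero_add, eval_one, eval_pow, eval_M_add_one, zero_pow (by omega)] at this
    exact one_ne_zero this
  refine collatzLength_eq_of_eq_one_add (Q := R ^ (2 * 2 ^ u)) (pow_ne_zero _ hR) ?_ ?_
  · rw [hA, hrange, CharTwo.geom_sum_two_mul_add_one, add_pow_char_pow, one_pow, mul_pow, ← pow_mul,
      add_comm]
  · have hfrob : (M * R + 1) ^ 2 ^ (u + 1) = (M * R) ^ 2 ^ (u + 1) + 1 := by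
      rw [add_pow_char_pow, one_pow]
    rw [← mul_pow, ← pow_succ', add_comm, ← hfrob, hMR, ← pow_mul, oddPart_M_add_one_pow]

theorem length_geom_sum_pow_two_minus_two (r u : ℕ) (hr : 2 ≤ r) (hu : 1 ≤ u)
    (A : Polynomial (ZMod 2))
    (hA : A = (∑ i ∈ Finset.range (2 ^ r - 2 + 1), M ^ i) ^ 2 ^ u) :
    collatzLength A = 2 ^ u + 1 :=
  length_geom_sum_pow_two_minus_two_general r u hr A hA
end
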